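/- arXiv:1801.03887 — 5 statements merged into one kernel-verified Lean document; each statement's English description precedes it below -/
import Mathlib

section
/- Let n ≥ 3, let A be a commutative ring with unit and I an ideal of A. Then E^◁(n+1, A; I²), the normal subgroup of E(n+1, A) generated by E(n+1, A; I²), is contained in the subgroup K(I) of SL_{n+1}(A) generated by the elementary matrices e_{i,j}(a) with 1 ≤ i ≠ j ≤ n+1, {i,j} ≠ {1, n+1}, and a ∈ I. -/
/-!
Let `M` be the monoid generated by the elementary matrices `e_{ij}(a)`, `a ∈ I`, with
`{i, j} ≠ {c, d}`. Since there are at least four indices, any `i ≠ j` admit a spare index `p`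
with `{i, p}, {p, j} ≠ {c, d}`, and the commutator `[e_{ip}(a), e_{pj}(b)] = e_{ij}(ab)` puts every
`e_{ij}(s)`, `s ∈ I²`, into `M`, corner positions included.

A conjugate `g e_{ij}(q) g⁻¹` equals `1 + v wᵀ` with `v = g e_i` and `wᵀ = q e_jᵀ g⁻¹`, so that
`w ⬝ v = 0` and `u ⬝ v = 1` for `uᵀ = e_iᵀ g⁻¹`. Hence `w = Σ_{k,l} u_k w_l (v_k e_l - v_l e_k)`
and `1 + v wᵀ` is a product of matrices `1 + s v (v_k e_l - v_l e_k)ᵀ` with `s ∈ I²`. For `s = ab`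
split `v = x + z` with `x` supported on `{k, l}` and `z` vanishing there: `1 + s x (…)ᵀ` is the
commutator of two products of elementary matrices of level `I` through a spare index, and
`1 + s z (…)ᵀ` is a product of elementary matrices of level `I²`.
-/

/-- The set of elementary matrices `e_{i,j}(a)` in `SL_N(A)` with `i ≠ j` and `a ∈ S`. -/
def elemSet (N : ℕ) (A : Type*) [CommRing A] (S : Set A) :
    Set (Matrix.SpecialLinearGroup (Fin N) A) :=
  {x | ∃ (i j : Fin N) (a : A), i ≠ j ∧ a ∈ S ∧
        x.1 = 1 + Matrix.single i j a}

open Matrix Finset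

theorem exists_spare_index {ι : Type*} [Fintype ι] [DecidableEq ι] (hι : 4 ≤ Fintype.card ι)
    (i j c d : ι) : ∃ p, p ≠ i ∧ p ≠ j ∧ s(p, i) ≠ s(c, d) ∧ s(p, j) ≠ s(c, d) := by
  by_cases h : i ∈ s(c, d) ∨ j ∈ s(c, d)
  · have hcard : #{i, j, c, d} < #(univ : Finset ι) := by
      rw [card_univ]
      refine lt_of_le_of_lt ?_ (show 3 < Fintype.card ι by omega)
      rcases h with h | h <;> rw [Sym2.mem_iff] at h
      · refine (card_le_card (t := {j, c, d}) fun x => ?_).trans card_le_three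
        simp only [mem_insert, mem_singleton]; grind
      · refine (card_le_card (t := {i, c, d}) fun x => ?_).trans card_le_three
        simp only [mem_insert, mem_singleton]; grind
    obtain ⟨p, -, hp⟩ := exists_mem_notMem_of_card_lt_card hcard
    simp only [mem_insert, mem_singleton, not_or] at hp
    have hcd : p ∉ s(c, d) := by simp [hp.2.2.1, hp.2.2.2]
    exact ⟨p, hp.1, hp.2.1, fun he => hcd (he ▸ Sym2.mem_mk_left p i),
      fun he => hcd (he ▸ Sym2.mem_mk_left p j)⟩
  · push Not at h
    obtain ⟨p, -, hp⟩ := exists_mem_notMem_of_card_lt_card (s := {i, j}) (t := univ)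
      (by rw [card_univ]; exact card_le_two.trans_lt (by omega))
    simp only [mem_insert, mem_singleton, not_or] at hp
    exact ⟨p, hp.1, hp.2, fun he => h.1 (he ▸ Sym2.mem_mk_right p i),
      fun he => h.2 (he ▸ Sym2.mem_mk_right p j)⟩

theorem one_add_mul_one_add_of_mul_eq_zero {R : Type*} [Ring R] {X Y : R} (h : X * Y = 0) :
    (1 + X) * (1 + Y) = 1 + (X + Y) := by
  rw [mul_add, add_mul, add_mul, h]; noncomm_ring

theorem one_add_commutator_of_mul_eq_zero {R : Type*} [Ring R] {X Y : R} (hX : X * X = 0)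
    (hY : Y * Y = 0) (hYX : Y * X = 0) : (1 + X) * (1 + Y) * (1 - X) * (1 - Y) = 1 + X * Y := by
  simp only [mul_add, add_mul, mul_sub, sub_mul, mul_one, one_mul, hX, hY, hYX, mul_assoc,
    mul_zero, zero_mul]
  abel

namespace Matrix

variable {ι A : Type*} [DecidableEq ι] [CommRing A]

theorem vecMulVec_single_single (i j : ι) (a b : A) :
    vecMulVec (Pi.single i a) (Pi.single j b) = single i j (a * b) := by
  ext p r
  simp only [vecMulVec_apply, single_apply, Pi.single_apply]
  split_ifs <;> simp_all

def skewVec (v : ι → A) (i j : ι) : ι → A := Pi.single j (v i) - Pi.single i (v j)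

theorem skewVec_self (v : ι → A) (i : ι) : skewVec v i i = 0 := sub_self _

theorem skewVec_apply_of_ne {v : ι → A} {i j r : ι} (hi : r ≠ i) (hj : r ≠ j) :
    skewVec v i j r = 0 := by
  simp [skewVec, hi, hj]

variable [Fintype ι]

theorem skewVec_dotProduct (v x : ι → A) (i j : ι) :
    skewVec v i j ⬝ᵥ x = v i * x j - v j * x i := by
  simp [skewVec, sub_dotProduct, single_dotProduct]

theorem skewVec_dotProduct_self (v : ι → A) (i j : ι) : skewVec v i j ⬝ᵥ v = 0 := by
  rw [skewVec_dotProduct]; ring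

theorem sum_smul_skewVec (u v w : ι → A) :
    ∑ kl : ι × ι, (u kl.1 * w kl.2) • skewVec v kl.1 kl.2 = (u ⬝ᵥ v) • w - (w ⬝ᵥ v) • u := by
  ext r
  simp only [Finset.sum_apply, Pi.smul_apply, skewVec, Pi.sub_apply, Pi.single_apply,
    Fintype.sum_prod_type, smul_eq_mul, dotProduct, mul_sub, Finset.sum_sub_distrib,
    Finset.sum_mul]
  simp [mul_comm, mul_left_comm]

theorem one_add_vecMulVec_add_right {v w w' : ι → A} (h : w ⬝ᵥ v = 0) :
    1 + vecMulVec v (w + w') = (1 + vecMulVec v w) * (1 + vecMulVec v w') := by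
  rw [mul_add, add_mul, add_mul, vecMulVec_mul_vecMulVec, h, zero_smul, vecMulVec_zero,
    vecMulVec_add]
  simp only [mul_one, one_mul, add_zero]; abel

theorem one_add_vecMulVec_add_left {v v' w : ι → A} (h : w ⬝ᵥ v' = 0) :
    1 + vecMulVec (v + v') w = (1 + vecMulVec v w) * (1 + vecMulVec v' w) := by
  rw [mul_add, add_mul, add_mul, vecMulVec_mul_vecMulVec, h, zero_smul, vecMulVec_zero,
    add_vecMulVec]
  simp only [mul_one, one_mul, add_zero]; abel

end Matrix

section Submonoid

variable {ι A : Type*} [Fintype ι] [DecidableEq ι] [CommRing A] {M : Submonoid (Matrix ι ι A)}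

theorem one_add_vecMulVec_sum_right_mem {κ : Type*} {v : ι → A} {z : κ → ι → A} (s : Finset κ)
    (hz : ∀ k ∈ s, z k ⬝ᵥ v = 0) (hM : ∀ k ∈ s, 1 + vecMulVec v (z k) ∈ M) :
    1 + vecMulVec v (∑ k ∈ s, z k) ∈ M := by
  classical
  induction s using Finset.induction_on with
  | empty => simp [M.one_mem]
  | insert k s hk ih =>
    rw [sum_insert hk, one_add_vecMulVec_add_right (hz k (mem_insert_self k s))]
    exact M.mul_mem (hM k (mem_insert_self k s))
      (ih (fun l hl => hz l (mem_insert_of_mem hl)) (fun l hl => hM l (mem_insert_of_mem hl)))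

theorem one_add_vecMulVec_sum_left_mem {κ : Type*} {w : ι → A} {z : κ → ι → A} (s : Finset κ)
    (hz : ∀ k ∈ s, w ⬝ᵥ z k = 0) (hM : ∀ k ∈ s, 1 + vecMulVec (z k) w ∈ M) :
    1 + vecMulVec (∑ k ∈ s, z k) w ∈ M := by
  classical
  induction s using Finset.induction_on with
  | empty => simp [M.one_mem]
  | insert k s hk ih =>
    have hs : w ⬝ᵥ ∑ l ∈ s, z l = 0 := by
      rw [dotProduct_sum]; exact sum_eq_zero fun l hl => hz l (mem_insert_of_mem hl)
    rw [sum_insert hk, one_add_vecMulVec_add_left hs]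
    exact M.mul_mem (hM k (mem_insert_self k s))
      (ih (fun l hl => hz l (mem_insert_of_mem hl)) (fun l hl => hM l (mem_insert_of_mem hl)))

theorem one_add_vecMulVec_mem_of_one_add_single_mem {v w : ι → A} (hvw : ∀ r, v r * w r = 0)
    (hM : ∀ r l, r ≠ l → 1 + single r l (v r * w l) ∈ M) : 1 + vecMulVec v w ∈ M := by
  rw [← univ_sum_single v]
  refine one_add_vecMulVec_sum_left_mem _ (fun r _ => ?_) (fun r _ => ?_)
  · rw [dotProduct_single, mul_comm, hvw]
  rw [← univ_sum_single w]
  refine one_add_vecMulVec_sum_right_mem _ (fun l _ => ?_) (fun l _ => ?_)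
  · rw [single_dotProduct, Pi.single_apply]
    split_ifs with h
    · rw [h, mul_comm, hvw]
    · exact mul_zero _
  rw [vecMulVec_single_single]
  obtain rfl | hrl := eq_or_ne r l
  · simp [hvw, M.one_mem]
  · exact hM r l hrl

end Submonoid

section Level

variable {ι A : Type*} [Fintype ι] [DecidableEq ι] [CommRing A]

def ContainsElementaryOff (M : Submonoid (Matrix ι ι A)) (I : Ideal A) (c d : ι) : Prop :=
  ∀ i j, i ≠ j → s(i, j) ≠ s(c, d) → ∀ a ∈ I, 1 + single i j a ∈ M

variable {M : Submonoid (Matrix ι ι A)} {I : Ideal A} {c d : ι}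

theorem ContainsElementaryOff.one_sub_single_mem (hM : ContainsElementaryOff M I c d) {i j : ι}
    (hij : i ≠ j) (hcd : s(i, j) ≠ s(c, d)) {a : A} (ha : a ∈ I) : 1 - single i j a ∈ M := by
  rw [sub_eq_add_neg, single_neg]
  exact hM i j hij hcd _ (neg_mem ha)

theorem ContainsElementaryOff.one_add_single_mem_of_mem_sq (hι : 4 ≤ Fintype.card ι)
    (hM : ContainsElementaryOff M I c d) {i j : ι} (hij : i ≠ j) {s : A} (hs : s ∈ I ^ 2) :
    1 + single i j s ∈ M := by
  rw [pow_two] at hs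
  refine Submodule.mul_induction_on hs (fun a ha b hb => ?_) (fun x y hx hy => ?_)
  · obtain ⟨p, hpi, hpj, hpi', hpj'⟩ := exists_spare_index hι i j c d
    rw [Sym2.eq_swap] at hpi'
    rw [← single_mul_single_same (c := a) i p j b, ← one_add_commutator_of_mul_eq_zero
      (by simp [hpi]) (by simp [hpj.symm]) (by simp [hij.symm])]
    exact M.mul_mem (M.mul_mem (M.mul_mem (hM i p hpi.symm hpi' a ha) (hM p j hpj hpj' b hb))
      (hM.one_sub_single_mem hpi.symm hpi' ha)) (hM.one_sub_single_mem hpj hpj' hb)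
  · rw [single_add, ← one_add_mul_one_add_of_mul_eq_zero (by simp [hij.symm])]
    exact M.mul_mem hx hy

-- The commutator of `1 + x (a e_p)ᵀ` and `1 + e_p (b skewVec v i j)ᵀ` for a spare index `p`.
theorem ContainsElementaryOff.one_add_vecMulVec_pair_mem (hι : 4 ≤ Fintype.card ι)
    (hM : ContainsElementaryOff M I c d) (v : ι → A) {i j : ι} (hij : i ≠ j) {a b : A}
    (ha : a ∈ I) (hb : b ∈ I) :
    1 + vecMulVec (Pi.single i (v i) + Pi.single j (v j)) ((a * b) • skewVec v i j) ∈ M := by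
  obtain ⟨p, hpi, hpj, hpi', hpj'⟩ := exists_spare_index hι i j c d
  rw [Sym2.eq_swap] at hpi' hpj'
  set x : ι → A := Pi.single i (v i) + Pi.single j (v j)
  set X := vecMulVec x (Pi.single p a)
  set Y := vecMulVec (Pi.single p 1) (b • skewVec v i j)
  have hX (a' : A) (ha' : a' ∈ I) : 1 + vecMulVec x (Pi.single p a') ∈ M := by
    rw [add_vecMulVec, vecMulVec_single_single, vecMulVec_single_single,
      ← one_add_mul_one_add_of_mul_eq_zero (by simp [hpj])]
    exact M.mul_mem (hM i p hpi.symm hpi' _ (I.mul_mem_left _ ha'))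
      (hM j p hpj.symm hpj' _ (I.mul_mem_left _ ha'))
  have hY (b' : A) (hb' : b' ∈ I) : 1 + vecMulVec (Pi.single p 1) (b' • skewVec v i j) ∈ M := by
    rw [vecMulVec_smul, skewVec, vecMulVec_sub, vecMulVec_single_single,
      vecMulVec_single_single, smul_sub, smul_single, smul_single, sub_eq_add_neg, single_neg,
      ← one_add_mul_one_add_of_mul_eq_zero (by simp [hpj.symm])]
    exact M.mul_mem (hM p j hpj (by rwa [Sym2.eq_swap]) _ (I.mul_mem_right _ hb'))
      (hM p i hpi (by rwa [Sym2.eq_swap]) _ (neg_mem (I.mul_mem_right _ hb')))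
  have hXX : X * X = 0 := by
    rw [vecMulVec_mul_vecMulVec, single_dotProduct]
    simp [x, hpi, hpj]
  have hYY : Y * Y = 0 := by
    rw [vecMulVec_mul_vecMulVec, dotProduct_single, Pi.smul_apply,
      skewVec_apply_of_ne hpi hpj, smul_zero, zero_mul, zero_smul, vecMulVec_zero]
  have hYX : Y * X = 0 := by
    rw [vecMulVec_mul_vecMulVec, smul_dotProduct, skewVec_dotProduct]
    simp [x, hij, hij.symm, mul_comm]
  have hXY : X * Y = vecMulVec x ((a * b) • skewVec v i j) := by
    rw [vecMulVec_mul_vecMulVec, single_dotProduct, Pi.single_eq_same, mul_one, smul_smul]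
  rw [← hXY, ← one_add_commutator_of_mul_eq_zero hXX hYY hYX]
  refine M.mul_mem (M.mul_mem (M.mul_mem (hX a ha) (hY b hb)) ?_) ?_
  · rw [sub_eq_add_neg, ← vecMulVec_neg, ← Pi.single_neg]
    exact hX _ (neg_mem ha)
  · rw [sub_eq_add_neg, ← vecMulVec_neg, ← neg_smul]
    exact hY _ (neg_mem hb)

theorem ContainsElementaryOff.one_add_vecMulVec_mul_smul_skewVec_mem (hι : 4 ≤ Fintype.card ι)
    (hM : ContainsElementaryOff M I c d) (v : ι → A) {i j : ι} (hij : i ≠ j) {a b : A}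
    (ha : a ∈ I) (hb : b ∈ I) : 1 + vecMulVec v ((a * b) • skewVec v i j) ∈ M := by
  set x : ι → A := Pi.single i (v i) + Pi.single j (v j)
  have hxi : x i = v i := by simp [x, hij]
  have hxj : x j = v j := by simp [x, hij.symm]
  have hsplit : 1 + vecMulVec v ((a * b) • skewVec v i j) =
      (1 + vecMulVec x ((a * b) • skewVec v i j)) *
        (1 + vecMulVec (v - x) ((a * b) • skewVec v i j)) := by
    rw [← one_add_vecMulVec_add_left, add_sub_cancel]
    rw [smul_dotProduct, skewVec_dotProduct, Pi.sub_apply, Pi.sub_apply, hxi, hxj]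
    simp
  rw [hsplit]
  refine M.mul_mem (hM.one_add_vecMulVec_pair_mem hι v hij ha hb) ?_
  refine one_add_vecMulVec_mem_of_one_add_single_mem (fun r => ?_) (fun r l hrl => ?_)
  · rw [Pi.smul_apply, Pi.sub_apply]
    by_cases hri : r = i
    · rw [hri, hxi, sub_self, zero_mul]
    by_cases hrj : r = j
    · rw [hrj, hxj, sub_self, zero_mul]
    rw [skewVec_apply_of_ne hri hrj, smul_zero, mul_zero]
  · refine hM.one_add_single_mem_of_mem_sq hι hrl (Ideal.mul_mem_left _ _ ?_)
    rw [Pi.smul_apply, smul_eq_mul, pow_two]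
    exact Ideal.mul_mem_right _ _ (Submodule.mul_mem_mul ha hb)

theorem ContainsElementaryOff.one_add_vecMulVec_smul_skewVec_mem (hι : 4 ≤ Fintype.card ι)
    (hM : ContainsElementaryOff M I c d) (v : ι → A) (i j : ι) {s : A} (hs : s ∈ I ^ 2) :
    1 + vecMulVec v (s • skewVec v i j) ∈ M := by
  obtain rfl | hij := eq_or_ne i j
  · simp [skewVec_self, M.one_mem]
  rw [pow_two] at hs
  refine Submodule.mul_induction_on hs (fun a ha b hb => ?_) (fun x y hx hy => ?_)
  · exact hM.one_add_vecMulVec_mul_smul_skewVec_mem hι v hij ha hb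
  · rw [add_smul, one_add_vecMulVec_add_right (by rw [smul_dotProduct, skewVec_dotProduct_self,
      smul_zero])]
    exact M.mul_mem hx hy

theorem ContainsElementaryOff.one_add_vecMulVec_mem (hι : 4 ≤ Fintype.card ι)
    (hM : ContainsElementaryOff M I c d) {u v w : ι → A} (huv : u ⬝ᵥ v = 1) (hwv : w ⬝ᵥ v = 0)
    (hw : ∀ l, w l ∈ I ^ 2) : 1 + vecMulVec v w ∈ M := by
  have hsum := sum_smul_skewVec u v w
  rw [huv, hwv, one_smul, zero_smul, sub_zero] at hsum
  rw [← hsum]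
  refine one_add_vecMulVec_sum_right_mem _ (fun kl _ => ?_) (fun kl _ => ?_)
  · rw [smul_dotProduct, skewVec_dotProduct_self, smul_zero]
  · exact hM.one_add_vecMulVec_smul_skewVec_mem hι v _ _ (Ideal.mul_mem_left _ _ (hw _))

theorem ContainsElementaryOff.mul_one_add_single_mul_mem (hι : 4 ≤ Fintype.card ι)
    (hM : ContainsElementaryOff M I c d) {g h : Matrix ι ι A} (hhg : h * g = 1) {i j : ι}
    (hij : i ≠ j) {q : A} (hq : q ∈ I ^ 2) : g * (1 + single i j q) * h ∈ M := by
  have hconj : g * (1 + single i j q) * h =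
      1 + vecMulVec (g *ᵥ Pi.single i 1) (Pi.single j q ᵥ* h) := by
    rw [← one_mul q, ← vecMulVec_single_single, mul_add, add_mul, mul_one, mul_eq_one_comm.1 hhg,
      mul_vecMulVec, vecMulVec_mul, one_mul]
  have hdot (k : ι) (x : A) :
      (Pi.single k x ᵥ* h) ⬝ᵥ (g *ᵥ Pi.single i 1) = x * (Pi.single i 1 : ι → A) k := by
    rw [← dotProduct_mulVec, mulVec_mulVec, hhg, one_mulVec, single_dotProduct]
  rw [hconj]
  refine hM.one_add_vecMulVec_mem hι (u := Pi.single i 1 ᵥ* h) ?_ ?_ (fun l => ?_)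
  · rw [hdot, Pi.single_eq_same, mul_one]
  · rw [hdot, Pi.single_eq_of_ne hij.symm, mul_zero]
  · rw [single_vecMul, Pi.smul_apply, smul_eq_mul]
    exact Ideal.mul_mem_right _ _ hq

end Level

theorem stmt_8 (n : ℕ) (hn : 3 ≤ n) (A : Type*) [CommRing A] (I : Ideal A) :
    -- `E(n+1, A)`
    ∀ E : Subgroup (Matrix.SpecialLinearGroup (Fin (n + 1)) A),
      E = Subgroup.closure (elemSet (n + 1) A Set.univ) →
    -- `E(n+1, A; I²)`
    ∀ EI2 : Subgroup (Matrix.SpecialLinearGroup (Fin (n + 1)) A),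
      EI2 = Subgroup.closure (elemSet (n + 1) A (↑(I ^ 2) : Set A)) →
    -- `E^◁(n+1, A; I²)`, the normal subgroup of `E(n+1,A)` generated by `E(n+1,A;I²)`
    ∀ Enorm : Subgroup (Matrix.SpecialLinearGroup (Fin (n + 1)) A),
      Enorm = Subgroup.closure {y | ∃ g ∈ E, ∃ x ∈ EI2, y = g * x * g⁻¹} →
    -- `K(I)`, generated by the `e_{i,j}(a)`, `a ∈ I`, with `{i,j} ≠ {1, n+1}`
    ∀ K : Subgroup (Matrix.SpecialLinearGroup (Fin (n + 1)) A),
      K = Subgroup.closure {x | ∃ (i j : Fin (n + 1)) (a : A), i ≠ j ∧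
            ¬(i = 0 ∧ j = Fin.last n) ∧ ¬(i = Fin.last n ∧ j = 0) ∧ a ∈ I ∧
            x.1 = 1 + Matrix.single i j a} →
    Enorm ≤ K := by
  intro E _ EI2 hEI2 Enorm hEnorm K hK
  have hι : 4 ≤ Fintype.card (Fin (n + 1)) := by simp; omega
  have hM : ContainsElementaryOff (K.toSubmonoid.map SpecialLinearGroup.coeMonoidHom) I 0
      (Fin.last n) := by
    refine fun i j hij hcd a ha => ⟨⟨_, det_transvection_of_ne i j hij a⟩, ?_, rfl⟩
    rw [Ne, Sym2.eq_iff, not_or] at hcd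
    exact hK ▸ Subgroup.subset_closure ⟨i, j, a, hij, hcd.1, hcd.2, ha, rfl⟩
  rw [hEnorm, Subgroup.closure_le]
  rintro _ ⟨g, -, x, hx, rfl⟩
  suffices EI2 ≤ K.comap (MulAut.conj g).toMonoidHom from this hx
  rw [hEI2, Subgroup.closure_le]
  rintro x ⟨i, j, q, hij, hq, hx⟩
  have hgg : SpecialLinearGroup.coeMonoidHom g⁻¹ * SpecialLinearGroup.coeMonoidHom g = 1 := by
    rw [← map_mul, inv_mul_cancel, map_one]
  obtain ⟨y, hyK, hy⟩ := hM.mul_one_add_single_mul_mem hι hgg hij hq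
  have hyx : y = g * x * g⁻¹ := by
    apply SpecialLinearGroup.coeMonoidHom_injective
    rw [hy, map_mul, map_mul, SpecialLinearGroup.coeMonoidHom_apply x, hx]
  change g * x * g⁻¹ ∈ K
  exact hyx ▸ hyK
end

section
/- Let n ≥ 2 and let q be a positive integer. Any two matrices g, h ∈ U_n(ℤ;q) satisfying g_{i,i+1} = h_{i,i+1} = q for all 1 ≤ i ≤ n−1 are conjugate in SL_n(ℤ). -/
/-!
Write `g = 1 + q A` with `A` strictly upper triangular and `A i (i+1) = 1`. Then the last
basis vector `e` is cyclic for `A`, and in the basis `A^{n-1} e, …, A e, e`, which is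
unipotent upper triangular and hence in `SL_n(ℤ)`, the matrix `A` becomes the nilpotent
Jordan block `J`. So every such `g` is conjugate to `1 + q J`.
-/

/-- `U_n(ℤ;q)`: unipotent upper-triangular integer matrices of determinant 1 whose
off-diagonal entries are divisible by `q`. -/
def Un (n : ℕ) (q : ℤ) : Set (Matrix.SpecialLinearGroup (Fin n) ℤ) :=
  {g | (∀ i, g.1 i i = 1) ∧ (∀ i j : Fin n, j < i → g.1 i j = 0) ∧
       (∀ i j : Fin n, i < j → q ∣ g.1 i j)}

/-- `L_n(ℤ;q)`: unipotent lower-triangular integer matrices of determinant 1 whose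
off-diagonal entries are divisible by `q`. -/
def Ln (n : ℕ) (q : ℤ) : Set (Matrix.SpecialLinearGroup (Fin n) ℤ) :=
  {g | (∀ i, g.1 i i = 1) ∧ (∀ i j : Fin n, i < j → g.1 i j = 0) ∧
       (∀ i j : Fin n, j < i → q ∣ g.1 i j)}

/-- `(U_n(ℤ;q) L_n(ℤ;q))^C = { u_1 l_1 ⋯ u_C l_C : u_i ∈ U_n(ℤ;q) ∪ {1}, l_i ∈ L_n(ℤ;q) ∪ {1} }`. -/
def ULpow (n : ℕ) (q : ℤ) (C : ℕ) : Set (Matrix.SpecialLinearGroup (Fin n) ℤ) :=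
  {x | ∃ u l : Fin C → Matrix.SpecialLinearGroup (Fin n) ℤ,
    (∀ i, u i ∈ Un n q ∪ {1}) ∧ (∀ i, l i ∈ Ln n q ∪ {1}) ∧
    (List.ofFn (fun i => u i * l i)).prod = x}

open Matrix

namespace Matrix

variable {R : Type*}

def shiftMatrix (R) [Zero R] [One R] (n : ℕ) : Matrix (Fin n) (Fin n) R :=
  of fun i j => if (j : ℕ) = i + 1 then 1 else 0

section Semiring

variable [Semiring R]

theorem mul_shiftMatrix_apply_zero {m : ℕ} (M : Matrix (Fin (m + 1)) (Fin (m + 1)) R)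
    (i : Fin (m + 1)) : (M * shiftMatrix R (m + 1)) i 0 = 0 := by
  rw [mul_apply]
  exact Finset.sum_eq_zero fun k _ => by simp [shiftMatrix]

theorem mul_shiftMatrix_apply_succ {m : ℕ} (M : Matrix (Fin (m + 1)) (Fin (m + 1)) R)
    (i : Fin (m + 1)) (j : Fin m) : (M * shiftMatrix R (m + 1)) i j.succ = M i j.castSucc := by
  rw [mul_apply, Finset.sum_eq_single j.castSucc]
  · simp [shiftMatrix]
  · intro k _ hk
    have : (j : ℕ) ≠ k := fun h => hk (Fin.ext (by simp [h]))
    simp [shiftMatrix, this]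
  · simp

variable {n : ℕ} {A : Matrix (Fin n) (Fin n) R}

theorem pow_apply_eq_zero_of_lt (hA : ∀ i j : Fin n, (j : ℕ) ≤ i → A i j = 0) (k : ℕ)
    {i j : Fin n} (hij : (j : ℕ) < i + k) : (A ^ k) i j = 0 := by
  induction k generalizing j with
  | zero => exact one_apply_ne' (Fin.ne_of_lt hij)
  | succ k ih =>
    rw [pow_succ, mul_apply]
    refine Finset.sum_eq_zero fun m _ => ?_
    rcases lt_or_ge (m : ℕ) (i + k) with hm | hm
    · rw [ih hm, zero_mul]
    · rw [hA m j (by omega), mul_zero]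

theorem pow_apply_eq_one_of_eq (hA₀ : ∀ i j : Fin n, (j : ℕ) ≤ i → A i j = 0)
    (hA₁ : ∀ i j : Fin n, (j : ℕ) = i + 1 → A i j = 1) (k : ℕ)
    {i j : Fin n} (hij : (j : ℕ) = i + k) : (A ^ k) i j = 1 := by
  induction k generalizing j with
  | zero =>
    obtain rfl : i = j := Fin.ext (by omega)
    exact one_apply_eq i
  | succ k ih =>
    let l : Fin n := ⟨i + k, by omega⟩
    rw [pow_succ, mul_apply, Finset.sum_eq_single l, ih rfl, hA₁ l j hij, one_mul]
    · intro m _ hm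
      have hm' : (m : ℕ) ≠ i + k := fun h => hm (Fin.ext h)
      rcases lt_or_gt_of_ne hm' with hm' | hm'
      · rw [pow_apply_eq_zero_of_lt hA₀ k hm', zero_mul]
      · rw [hA₀ m j (by omega), mul_zero]
    · simp

end Semiring

theorem exists_det_eq_one_mul_eq_mul_shiftMatrix [CommRing R] {n : ℕ}
    {A : Matrix (Fin n) (Fin n) R} (hA₀ : ∀ i j : Fin n, (j : ℕ) ≤ i → A i j = 0)
    (hA₁ : ∀ i j : Fin n, (j : ℕ) = i + 1 → A i j = 1) :
    ∃ C : Matrix (Fin n) (Fin n) R, C.det = 1 ∧ A * C = C * shiftMatrix R n := by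
  cases n with
  | zero => exact ⟨1, det_one, Subsingleton.elim _ _⟩
  | succ m =>
    let C : Matrix (Fin (m + 1)) (Fin (m + 1)) R := of fun i j => (A ^ (m - j)) i (Fin.last m)
    have hC : C.BlockTriangular id := fun i j (hji : j < i) =>
      pow_apply_eq_zero_of_lt hA₀ _ (by simp; omega)
    refine ⟨C, ?_, ?_⟩
    · rw [det_of_isUpperTriangular hC]
      exact Finset.prod_eq_one fun i _ => pow_apply_eq_one_of_eq hA₀ hA₁ _ (by simp; omega)
    · ext i j
      have hAC : (A * C) i j = (A ^ (m - j + 1)) i (Fin.last m) := by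
        rw [pow_succ', mul_apply, mul_apply]; rfl
      rw [hAC]
      cases j using Fin.cases with
      | zero =>
        rw [mul_shiftMatrix_apply_zero]
        exact pow_apply_eq_zero_of_lt hA₀ _ (by simp; omega)
      | succ j =>
        rw [mul_shiftMatrix_apply_succ]
        show _ = (A ^ (m - j)) i (Fin.last m)
        rw [Fin.val_succ, Nat.sub_add_eq, Nat.sub_add_cancel (by omega)]

theorem SpecialLinearGroup.exists_coe_conj_eq_one_add_smul_shiftMatrix [CommRing R] {n : ℕ}
    (g : SpecialLinearGroup (Fin n) R) {q : R} {A : Matrix (Fin n) (Fin n) R}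
    (hA₀ : ∀ i j : Fin n, (j : ℕ) ≤ i → A i j = 0)
    (hA₁ : ∀ i j : Fin n, (j : ℕ) = i + 1 → A i j = 1)
    (hg : (g : Matrix (Fin n) (Fin n) R) = 1 + q • A) :
    ∃ c : SpecialLinearGroup (Fin n) R,
      ((c * g * c⁻¹ : SpecialLinearGroup (Fin n) R) : Matrix (Fin n) (Fin n) R) =
        1 + q • shiftMatrix R n := by
  obtain ⟨C, hdet, hAC⟩ := exists_det_eq_one_mul_eq_mul_shiftMatrix hA₀ hA₁
  let c : SpecialLinearGroup (Fin n) R := ⟨C, hdet⟩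
  have hgc : (g : Matrix (Fin n) (Fin n) R) * C = C * (1 + q • shiftMatrix R n) := by
    rw [hg, add_mul, one_mul, Matrix.smul_mul, hAC, mul_add, mul_one, Matrix.mul_smul]
  refine ⟨c⁻¹, ?_⟩
  rw [inv_inv, SpecialLinearGroup.coe_mul, SpecialLinearGroup.coe_mul, mul_assoc]
  change _ * (_ * C) = _
  rw [hgc, ← mul_assoc]
  change ((c⁻¹ * c : SpecialLinearGroup (Fin n) R) : Matrix (Fin n) (Fin n) R) * _ = _
  rw [inv_mul_cancel, SpecialLinearGroup.coe_one, one_mul]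

end Matrix

theorem exists_eq_one_add_smul_of_mem_Un {n : ℕ} {q : ℤ} (hq : q ≠ 0)
    {g : SpecialLinearGroup (Fin n) ℤ} (hg : g ∈ Un n q)
    (hsup : ∀ i : Fin n, ∀ hi : (i : ℕ) + 1 < n, g.1 i ⟨(i : ℕ) + 1, hi⟩ = q) :
    ∃ A : Matrix (Fin n) (Fin n) ℤ, (∀ i j : Fin n, (j : ℕ) ≤ i → A i j = 0) ∧
      (∀ i j : Fin n, (j : ℕ) = i + 1 → A i j = 1) ∧
      (g : Matrix (Fin n) (Fin n) ℤ) = 1 + q • A := by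
  obtain ⟨hdiag, hlow, hdvd⟩ := hg
  refine ⟨of fun i j => if i < j then g.1 i j / q else 0,
    fun i j hji => if_neg (Fin.not_lt.2 hji), fun i j hj => ?_, ?_⟩
  · have hi : (i : ℕ) + 1 < n := hj ▸ j.isLt
    obtain rfl : j = ⟨i + 1, hi⟩ := Fin.ext hj
    have hlt : i < ⟨i + 1, hi⟩ := Fin.lt_def.2 (Nat.lt_succ_self _)
    simp [hlt, hsup, Int.ediv_self hq]
  · ext i j
    rcases lt_trichotomy i j with hij | rfl | hij
    · simp [hij, hij.ne, Int.mul_ediv_cancel' (hdvd i j hij)]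
    · simp [hdiag]
    · simp [hij.ne', not_lt.2 hij.le, hlow i j hij]

theorem stmt_10_general (n : ℕ) (q : ℕ) (hq : 0 < q)
    (g h : Matrix.SpecialLinearGroup (Fin n) ℤ)
    (hg : g ∈ Un n q) (hh : h ∈ Un n q)
    (hg' : ∀ i : Fin n, ∀ hi : (i : ℕ) + 1 < n, g.1 i ⟨(i : ℕ) + 1, hi⟩ = q)
    (hh' : ∀ i : Fin n, ∀ hi : (i : ℕ) + 1 < n, h.1 i ⟨(i : ℕ) + 1, hi⟩ = q) :
    ∃ c : Matrix.SpecialLinearGroup (Fin n) ℤ, c * g * c⁻¹ = h := by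
  have hq' : (q : ℤ) ≠ 0 := by exact_mod_cast hq.ne'
  obtain ⟨A, hA₀, hA₁, hgA⟩ := exists_eq_one_add_smul_of_mem_Un hq' hg hg'
  obtain ⟨B, hB₀, hB₁, hhB⟩ := exists_eq_one_add_smul_of_mem_Un hq' hh hh'
  obtain ⟨c, hc⟩ := g.exists_coe_conj_eq_one_add_smul_shiftMatrix hA₀ hA₁ hgA
  obtain ⟨d, hd⟩ := h.exists_coe_conj_eq_one_add_smul_shiftMatrix hB₀ hB₁ hhB
  have hcd : c * g * c⁻¹ = d * h * d⁻¹ := Subtype.ext (hc.trans hd.symm)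
  refine ⟨d⁻¹ * c, ?_⟩
  calc d⁻¹ * c * g * (d⁻¹ * c)⁻¹ = d⁻¹ * (c * g * c⁻¹) * d := by group
    _ = h := by rw [hcd]; group

theorem stmt_10 (n : ℕ) (hn : 2 ≤ n) (q : ℕ) (hq : 0 < q)
    (g h : Matrix.SpecialLinearGroup (Fin n) ℤ)
    (hg : g ∈ Un n q) (hh : h ∈ Un n q)
    (hg' : ∀ i : Fin n, ∀ hi : (i : ℕ) + 1 < n, g.1 i ⟨(i : ℕ) + 1, hi⟩ = q)
    (hh' : ∀ i : Fin n, ∀ hi : (i : ℕ) + 1 < n, h.1 i ⟨(i : ℕ) + 1, hi⟩ = q) :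
    ∃ c : Matrix.SpecialLinearGroup (Fin n) ℤ, c * g * c⁻¹ = h :=
  stmt_10_general n q hq g h hg hh hg' hh'
end

section
/- Let p be a prime, n, m ≥ 1, k ≥ 0 integers, and let f = (f_1, …, f_m) where each f_i is a polynomial in n variables with coefficients in ℤ_p such that: (i) f_i(0) = 0 for all i; (ii) every coefficient of every f_i is divisible by p^k; (iii) the image of ℤ_p^n under the Jacobian linear map df(0) = (∂f_i/∂x_j(0)) contains p^k ℤ_p^m. Then f(ℤ_p^n) contains p^{k+1} ℤ_p^m, i.e. every b ∈ ℤ_p^m all of whose coordinates are divisible by p^{k+1} is of the form f(a) for some a ∈ ℤ_p^n. -/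
/-!
Newton's method in a `π`-adically complete ring. Starting from `a = 0`, replace `a` by
`a + π ^ (s + 1) • v`, where `v` solves the equation linearised at `0` with right-hand side
`(b - f a) / π ^ (k + 1 + s)`. Since `π ^ k` divides all coefficients, the Taylor remainder is
divisible by `π ^ k * π ^ (2 * s + 2)`, and because `π ∣ a` the linearisation at `a` differs
from the one at `0` by a multiple of `π ^ (k + 1)`; so each step gains a power of `π`.
The corrections converge `π`-adically and, by separatedness, the limit solves `f a = b`.
-/

open MvPolynomial

namespace MvPolynomial

variable {R σ : Type*} [CommRing R]

theorem dvd_eval_sub_eval {c : R} {a b : σ → R} (hab : ∀ j, c ∣ a j - b j)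
    (g : MvPolynomial σ R) : c ∣ eval a g - eval b g := by
  induction g using MvPolynomial.induction_on with
  | C r => simp
  | add q r hq hr => simpa [add_sub_add_comm] using dvd_add hq hr
  | mul_X q i hq =>
    have e : eval a (q * X i) - eval b (q * X i)
        = (eval a q - eval b q) * a i + eval b q * (a i - b i) := by
      simp only [eval_mul, eval_X]; ring
    rw [e]
    exact dvd_add (hq.mul_right _) ((hab i).mul_left _)

theorem mul_dvd_eval_sub_eval {e c : R} {g : MvPolynomial σ R} (hg : ∀ d, e ∣ coeff d g)
    {a b : σ → R} (hab : ∀ j, c ∣ a j - b j) : e * c ∣ eval a g - eval b g := by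
  obtain ⟨g, rfl⟩ := (C_dvd_iff_dvd_coeff e g).2 hg
  simpa only [eval_mul, eval_C, ← mul_sub] using mul_dvd_mul_left e (dvd_eval_sub_eval hab g)

theorem dvd_coeff_pderiv {e : R} {g : MvPolynomial σ R} (hg : ∀ d, e ∣ coeff d g) (j : σ)
    (d : σ →₀ ℕ) : e ∣ coeff d (pderiv j g) := by
  obtain ⟨g, rfl⟩ := (C_dvd_iff_dvd_coeff e g).2 hg
  rw [pderiv_C_mul]
  exact (C_dvd_iff_dvd_coeff e _).1 (dvd_mul_right _ _) d

variable [Fintype σ]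

noncomputable def dirDeriv (g : MvPolynomial σ R) (a v : σ → R) : R :=
  ∑ j, eval a (pderiv j g) * v j

@[simp]
theorem dirDeriv_C (r : R) (a v : σ → R) : dirDeriv (C r) a v = 0 := by
  simp [dirDeriv]

theorem dirDeriv_add (g₁ g₂ : MvPolynomial σ R) (a v : σ → R) :
    dirDeriv (g₁ + g₂) a v = dirDeriv g₁ a v + dirDeriv g₂ a v := by
  simp only [dirDeriv, map_add, add_mul, Finset.sum_add_distrib]

theorem dirDeriv_mul_X (g : MvPolynomial σ R) (i : σ) (a v : σ → R) :
    dirDeriv (g * X i) a v = dirDeriv g a v * a i + eval a g * v i := by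
  classical
  simp only [dirDeriv, pderiv_mul, pderiv_X, Pi.single_apply, mul_ite, mul_one, mul_zero,
    eval_add, eval_mul, eval_X, add_mul, Finset.sum_add_distrib, Finset.sum_mul]
  simp [apply_ite, ite_mul, mul_right_comm]

theorem dirDeriv_C_mul (r : R) (g : MvPolynomial σ R) (a v : σ → R) :
    dirDeriv (C r * g) a v = r * dirDeriv g a v := by
  simp only [dirDeriv, pderiv_C_mul, eval_mul, eval_C, Finset.mul_sum, mul_assoc]

theorem dirDeriv_smul (g : MvPolynomial σ R) (a : σ → R) (r : R) (v : σ → R) :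
    dirDeriv g a (r • v) = r * dirDeriv g a v := by
  simp only [dirDeriv, Pi.smul_apply, smul_eq_mul, Finset.mul_sum, mul_left_comm]

theorem sq_dvd_eval_add_sub_eval_sub_dirDeriv {c : R} {h : σ → R} (hh : ∀ j, c ∣ h j)
    (a : σ → R) (g : MvPolynomial σ R) :
    c ^ 2 ∣ eval (a + h) g - eval a g - dirDeriv g a h := by
  induction g using MvPolynomial.induction_on with
  | C r => simp
  | add q r hq hr =>
    rw [dirDeriv_add]
    simpa only [eval_add, add_sub_add_comm] using dvd_add hq hr
  | mul_X q i hq =>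
    have e : eval (a + h) (q * X i) - eval a (q * X i) - dirDeriv (q * X i) a h
        = (eval (a + h) q - eval a q - dirDeriv q a h) * a i
          + (eval (a + h) q - eval a q) * h i := by
      simp only [dirDeriv_mul_X, eval_mul, eval_X, Pi.add_apply]; ring
    rw [e]
    exact dvd_add (hq.mul_right _)
      (sq c ▸ mul_dvd_mul (dvd_eval_sub_eval (by simpa using hh) q) (hh i))

theorem mul_sq_dvd_eval_add_sub_eval_sub_dirDeriv {e c : R} {g : MvPolynomial σ R}
    (hg : ∀ d, e ∣ coeff d g) {h : σ → R} (hh : ∀ j, c ∣ h j) (a : σ → R) :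
    e * c ^ 2 ∣ eval (a + h) g - eval a g - dirDeriv g a h := by
  obtain ⟨g, rfl⟩ := (C_dvd_iff_dvd_coeff e g).2 hg
  simpa only [eval_mul, eval_C, dirDeriv_C_mul, ← mul_sub] using
    mul_dvd_mul_left e (sq_dvd_eval_add_sub_eval_sub_dirDeriv hh a g)

theorem mul_dvd_dirDeriv_sub_dirDeriv {e c c' : R} {g : MvPolynomial σ R}
    (hg : ∀ d, e ∣ coeff d g) {a b : σ → R} (hab : ∀ j, c ∣ a j - b j) {v : σ → R}
    (hv : ∀ j, c' ∣ v j) : e * c * c' ∣ dirDeriv g a v - dirDeriv g b v := by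
  rw [dirDeriv, dirDeriv, ← Finset.sum_sub_distrib]
  refine Finset.dvd_sum fun j _ => ?_
  rw [← sub_mul]
  exact mul_dvd_mul (mul_dvd_eval_sub_eval (dvd_coeff_pderiv hg j) hab) (hv j)

end MvPolynomial

section AdicComplete

variable {R : Type*} [CommRing R] {π : R}

theorem smodEq_span_singleton_pow_iff {n : ℕ} {x y : R} :
    x ≡ y [SMOD (Ideal.span {π} ^ n • ⊤ : Submodule R R)] ↔ π ^ n ∣ x - y := by
  rw [SModEq.sub_mem, smul_eq_mul, Ideal.mul_top, Ideal.span_singleton_pow,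
    Ideal.mem_span_singleton]

theorem eq_zero_of_forall_pow_dvd [IsHausdorff (Ideal.span {π}) R] {x : R}
    (hx : ∀ n, π ^ n ∣ x) : x = 0 :=
  IsHausdorff.haus ‹_› x fun n => smodEq_span_singleton_pow_iff.2 (by simpa using hx n)

theorem exists_forall_pow_dvd_sub_of_pow_dvd_succ_sub [IsPrecomplete (Ideal.span {π}) R]
    {x : ℕ → R} (hx : ∀ n, π ^ n ∣ x (n + 1) - x n) :
    ∃ L, ∀ n, π ^ n ∣ x n - L := by
  have hchain {m n : ℕ} (hmn : m ≤ n) : π ^ m ∣ x n - x m := by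
    induction n, hmn using Nat.le_induction with
    | base => simp
    | succ n hmn ih =>
      simpa using dvd_add ((pow_dvd_pow π hmn).trans (hx n)) ih
  obtain ⟨L, hL⟩ := IsPrecomplete.prec ‹_› fun hmn =>
    smodEq_span_singleton_pow_iff.2 (dvd_sub_comm.1 (hchain hmn))
  exact ⟨L, fun n => smodEq_span_singleton_pow_iff.1 (hL n)⟩

end AdicComplete

section Newton

variable {R σ ι : Type*} [CommRing R] [Fintype σ] {π : R} {k : ℕ}
  {f : ι → MvPolynomial σ R}

theorem exists_newton_step (hcoeff : ∀ i d, π ^ k ∣ coeff d (f i))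
    (hjac : ∀ c : ι → R, ∃ v, ∀ i, dirDeriv (f i) 0 v = π ^ k * c i)
    {s : ℕ} {a : σ → R} {b : ι → R} (ha : ∀ j, π ∣ a j)
    (hb : ∀ i, π ^ (k + 1 + s) ∣ b i - eval a (f i)) :
    ∃ h : σ → R, (∀ j, π ^ (s + 1) ∣ h j) ∧
      ∀ i, π ^ (k + 1 + (s + 1)) ∣ b i - eval (a + h) (f i) := by
  choose c hc using hb
  obtain ⟨v, hv⟩ := hjac c
  set h : σ → R := π ^ (s + 1) • v
  have hh (j : σ) : π ^ (s + 1) ∣ h j := dvd_mul_right _ _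
  refine ⟨h, hh, fun i => ?_⟩
  have hlin : dirDeriv (f i) 0 h = b i - eval a (f i) := by
    rw [dirDeriv_smul, hv, hc]; ring
  have key : b i - eval (a + h) (f i)
      = -(eval (a + h) (f i) - eval a (f i) - dirDeriv (f i) a h)
        - (dirDeriv (f i) a h - dirDeriv (f i) 0 h) := by
    rw [hlin]; ring
  rw [key]
  refine dvd_sub (dvd_neg.2 ?_) ?_
  · refine dvd_trans ?_ (mul_sq_dvd_eval_add_sub_eval_sub_dirDeriv (hcoeff i) hh a)
    exact ⟨π ^ s, by ring⟩
  · refine dvd_trans ?_ (mul_dvd_dirDeriv_sub_dirDeriv (hcoeff i) (by simpa using ha) hh)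
    exact ⟨1, by ring⟩

theorem exists_eval_eq_of_pow_dvd [IsAdicComplete (Ideal.span {π}) R]
    (h0 : ∀ i, eval 0 (f i) = 0) (hcoeff : ∀ i d, π ^ k ∣ coeff d (f i))
    (hjac : ∀ c : ι → R, ∃ v, ∀ i, dirDeriv (f i) 0 v = π ^ k * c i)
    {b : ι → R} (hb : ∀ i, π ^ (k + 1) ∣ b i) : ∃ a, ∀ i, eval a (f i) = b i := by
  choose! h hh hbh using fun s (a : σ → R) (ha : ∀ j, π ∣ a j)
    (hb : ∀ i, π ^ (k + 1 + s) ∣ b i - eval a (f i)) => exists_newton_step hcoeff hjac ha hb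
  let x : ℕ → σ → R := fun s => Nat.rec 0 (fun s xs => xs + h s xs) s
  have hx (s : ℕ) :
      (∀ j, π ∣ x s j) ∧ ∀ i, π ^ (k + 1 + s) ∣ b i - eval (x s) (f i) := by
    induction s with
    | zero =>
      refine ⟨fun _ => dvd_zero π, fun i => ?_⟩
      change _ ∣ b i - eval 0 (f i)
      rw [h0, sub_zero]
      exact hb i
    | succ s ih =>
      exact ⟨fun j => dvd_add (ih.1 j) ((dvd_pow_self π s.succ_ne_zero).trans
        (hh s _ ih.1 ih.2 j)), hbh s _ ih.1 ih.2⟩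
  have hxsucc (s : ℕ) (j : σ) : π ^ s ∣ x (s + 1) j - x s j := by
    refine (pow_dvd_pow π s.le_succ).trans ?_
    simpa [x] using hh s _ (hx s).1 (hx s).2 j
  choose L hL using fun j =>
    exists_forall_pow_dvd_sub_of_pow_dvd_succ_sub (x := (x · j)) (hxsucc · j)
  refine ⟨L, fun i => (sub_eq_zero.1 (eq_zero_of_forall_pow_dvd (π := π) fun s => ?_)).symm⟩
  have hfar := (pow_dvd_pow π (by omega : s ≤ k + 1 + s)).trans ((hx s).2 i)
  simpa using dvd_add hfar (dvd_eval_sub_eval (fun j => hL j s) (f i))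

end Newton

theorem stmt_11_general (p : ℕ) [Fact p.Prime] (n m : ℕ) (k : ℕ)
    (f : Fin m → MvPolynomial (Fin n) ℤ_[p])
    -- (i) `f_i(0) = 0`
    (h0 : ∀ i, MvPolynomial.eval (0 : Fin n → ℤ_[p]) (f i) = 0)
    -- (ii) every coefficient of every `f_i` is divisible by `p^k`
    (hcoeff : ∀ (i : Fin m) (d : (Fin n) →₀ ℕ), (p : ℤ_[p]) ^ k ∣ MvPolynomial.coeff d (f i))
    -- (iii) the image of the Jacobian `df(0)` contains `p^k ℤ_p^m`
    (hjac : ∀ b : Fin m → ℤ_[p], ∃ v : Fin n → ℤ_[p], ∀ i,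
      ∑ j, MvPolynomial.eval (0 : Fin n → ℤ_[p]) (MvPolynomial.pderiv j (f i)) * v j
        = (p : ℤ_[p]) ^ k * b i) :
    ∀ b : Fin m → ℤ_[p], (∀ i, (p : ℤ_[p]) ^ (k + 1) ∣ b i) →
      ∃ a : Fin n → ℤ_[p], ∀ i, MvPolynomial.eval a (f i) = b i := by
  have : IsAdicComplete (Ideal.span {(p : ℤ_[p])}) ℤ_[p] :=
    PadicInt.maximalIdeal_eq_span_p (p := p) ▸ inferInstance
  exact fun b hb => exists_eval_eq_of_pow_dvd h0 hcoeff hjac hb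

theorem stmt_11 (p : ℕ) [Fact p.Prime] (n m : ℕ) (hn : 1 ≤ n) (hm : 1 ≤ m) (k : ℕ)
    (f : Fin m → MvPolynomial (Fin n) ℤ_[p])
    -- (i) `f_i(0) = 0`
    (h0 : ∀ i, MvPolynomial.eval (0 : Fin n → ℤ_[p]) (f i) = 0)
    -- (ii) every coefficient of every `f_i` is divisible by `p^k`
    (hcoeff : ∀ (i : Fin m) (d : (Fin n) →₀ ℕ), (p : ℤ_[p]) ^ k ∣ MvPolynomial.coeff d (f i))
    -- (iii) the image of the Jacobian `df(0)` contains `p^k ℤ_p^m`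
    (hjac : ∀ b : Fin m → ℤ_[p], ∃ v : Fin n → ℤ_[p], ∀ i,
      ∑ j, MvPolynomial.eval (0 : Fin n → ℤ_[p]) (MvPolynomial.pderiv j (f i)) * v j
        = (p : ℤ_[p]) ^ k * b i) :
    ∀ b : Fin m → ℤ_[p], (∀ i, (p : ℤ_[p]) ^ (k + 1) ∣ b i) →
      ∃ a : Fin n → ℤ_[p], ∀ i, MvPolynomial.eval a (f i) = b i :=
  stmt_11_general p n m k f h0 hcoeff hjac
end

section
/- Let n ≥ 3, let F be a finite field, and let a, b ∈ SL_n(F) be elements that generate SL_n(F). Then the linear map sl_n(F) × sl_n(F) → sl_n(F) given by (X, Y) ↦ b⁻¹(X − a⁻¹Xa)b + (Y − b⁻¹Yb) is surjective; that is, for every trace-zero matrix Z ∈ sl_n(F) there exist trace-zero matrices X, Y with b⁻¹(X − a⁻¹Xa)b + (Y − b⁻¹Yb) = Z. -/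
/-!
Under the trace pairing, the annihilator of `sl_n` is the line of scalar matrices. So if `W` is
orthogonal to the image of the map, then both `W - b W b⁻¹` and `U - a U a⁻¹`, with `U = b W b⁻¹`,
are scalar: `a` and `b` centralize `W` modulo scalars. These elements form a subgroup, which is
therefore all of `SL_n`. A transvection `1 + E_ij` centralizing `W` modulo `μ • 1` has `μ = 0`
(read off a diagonal entry `(k, k)` with `k ∉ {i, j}`, which needs `n ≥ 3`), so it commutes with
`W`; hence `W` is scalar and orthogonal to `sl_n`. By duality the image contains `sl_n`.
-/

open Matrix

section CentralizerModScalars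

variable (R : Type*) {A : Type*} [CommRing R] [Ring A] [Algebra R A]

theorem Units.mul_algebraMap_mul_inv (g : Aˣ) (r : R) :
    ↑g * algebraMap R A r * ↑g⁻¹ = algebraMap R A r := by
  rw [← Algebra.commutes, mul_assoc, Units.mul_inv, mul_one]

def centralizerModScalars (Z : A) : Subgroup Aˣ where
  carrier := {g | ∃ μ : R, ↑g * Z * ↑g⁻¹ = Z + algebraMap R A μ}
  one_mem' := ⟨0, by simp⟩
  mul_mem' := by
    rintro g h ⟨μ, hμ⟩ ⟨ν, hν⟩
    refine ⟨μ + ν, ?_⟩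
    calc ((g * h : Aˣ) : A) * Z * ↑(g * h)⁻¹ = g * (h * Z * ↑h⁻¹) * ↑g⁻¹ := by
          simp only [_root_.mul_inv_rev, Units.val_mul, mul_assoc]
      _ = Z + algebraMap R A (μ + ν) := by
          rw [hν, mul_add, add_mul, hμ, Units.mul_algebraMap_mul_inv, map_add, add_assoc]
  inv_mem' := by
    rintro g ⟨μ, hμ⟩
    refine ⟨-μ, ?_⟩
    calc ((g⁻¹ : Aˣ) : A) * Z * ↑g⁻¹⁻¹
        = ↑g⁻¹ * (Z + algebraMap R A μ) * ↑g⁻¹⁻¹ - algebraMap R A μ := by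
          rw [mul_add, add_mul, Units.mul_algebraMap_mul_inv, add_sub_cancel_right]
      _ = ↑g⁻¹ * (g * Z * ↑g⁻¹) * g - algebraMap R A μ := by rw [hμ, inv_inv]
      _ = Z + algebraMap R A (-μ) := by simp [mul_assoc, sub_eq_add_neg]

variable {R}

theorem mem_centralizerModScalars {Z : A} {g : Aˣ} :
    g ∈ centralizerModScalars R Z ↔ ∃ μ : R, ↑g * Z * ↑g⁻¹ = Z + algebraMap R A μ :=
  Iff.rfl

theorem mem_centralizerModScalars_of_sub_eq {Z : A} {g : Aˣ} {c : R}
    (h : Z - ↑g * Z * ↑g⁻¹ = algebraMap R A c) : g ∈ centralizerModScalars R Z :=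
  ⟨-c, by rw [map_neg, ← h]; abel⟩

theorem centralizerModScalars_add_algebraMap (Z : A) (c : R) :
    centralizerModScalars R (Z + algebraMap R A c) = centralizerModScalars R Z := by
  ext g
  simp only [mem_centralizerModScalars, mul_add, add_mul, Units.mul_algebraMap_mul_inv,
    add_right_comm _ (algebraMap R A c), add_left_inj]

end CentralizerModScalars

namespace Matrix

variable {n R : Type*} [Fintype n] [CommRing R]

theorem trace_mul_mul_mul_rotate (Z P X Q : Matrix n n R) :
    (Z * (P * X * Q)).trace = (Q * Z * P * X).trace := by
  rw [← Matrix.mul_assoc, ← Matrix.mul_assoc, trace_mul_cycle]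
  simp only [Matrix.mul_assoc]

theorem trace_mul_sub_mul_mul (Z X P Q : Matrix n n R) :
    (Z * (X - P * X * Q)).trace = ((Z - Q * Z * P) * X).trace := by
  rw [mul_sub, trace_sub, trace_mul_mul_mul_rotate, ← trace_sub, ← sub_mul]

variable [DecidableEq n]

theorem exists_forall_eq_trace_mul (φ : Module.Dual R (Matrix n n R)) :
    ∃ W : Matrix n n R, ∀ C, φ C = (W * C).trace := by
  refine ⟨of fun j i => φ (single i j 1), fun C => ?_⟩
  have single_eq_smul : ∀ i j, single i j (C i j) = C i j • single i j (1 : R) := fun i j => by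
    rw [smul_single, smul_eq_mul, mul_one]
  conv_lhs => rw [matrix_eq_sum_single C]
  simp only [single_eq_smul, map_sum, map_smul, trace, diag_apply, mul_apply, of_apply,
    smul_eq_mul]
  rw [Finset.sum_comm]
  simp only [mul_comm]

theorem mem_range_scalar_of_forall_trace_mul_eq_zero {C : Matrix n n R}
    (hC : ∀ Y : Matrix n n R, Y.trace = 0 → (C * Y).trace = 0) :
    C ∈ Set.range (scalar n) := by
  rcases isEmpty_or_nonempty n with _ | ⟨⟨i₀⟩⟩
  · exact ⟨0, Subsingleton.elim _ _⟩
  have off_diag : ∀ k l, k ≠ l → C k l = 0 := fun k l hkl => by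
    simpa [trace_mul_single] using hC (single l k 1) (trace_single_eq_of_ne _ _ _ hkl.symm)
  have diag : ∀ k, C k k = C i₀ i₀ := fun k => by
    have := hC (single k k 1 - single i₀ i₀ 1) (by simp)
    simpa [mul_sub, trace_sub, trace_mul_single, sub_eq_zero] using this
  refine ⟨C i₀ i₀, ext fun k l => ?_⟩
  rcases eq_or_ne k l with rfl | hkl
  · simp [diag]
  · simp [off_diag k l hkl, hkl]

theorem mem_range_scalar_of_forall_transvection_mul_eq (hn : 3 ≤ Fintype.card n)
    {Z : Matrix n n R}
    (h : ∀ i j, i ≠ j →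
      ∃ μ : R, transvection i j 1 * Z = (Z + scalar n μ) * transvection i j 1) :
    Z ∈ Set.range (scalar n) := by
  refine mem_range_scalar_of_commute_single fun i j hij => ?_
  obtain ⟨μ, hμ⟩ := h i j hij
  obtain ⟨k, hki, hkj⟩ := ENat.exists_ne_ne_of_three_le (by simpa using hn) i j
  have hμ0 : μ = 0 := by
    simpa [transvection, add_mul, mul_add, single_mul_apply_of_ne, mul_single_apply_of_ne, hki,
      hkj] using congr_fun₂ hμ k k
  simp only [transvection, hμ0, map_zero, add_zero, mul_add, add_mul, one_mul, mul_one] at hμ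
  exact add_left_cancel hμ

end Matrix

namespace Matrix.SpecialLinearGroup

variable {n R : Type*} [Fintype n] [DecidableEq n] [CommRing R]

theorem mem_range_scalar_of_closure_eq_top (hn : 3 ≤ Fintype.card n)
    {S : Set (SpecialLinearGroup n R)} (hS : Subgroup.closure S = ⊤) {Z : Matrix n n R}
    (hZ : ∀ g ∈ S, toGL g ∈ centralizerModScalars R Z) :
    Z ∈ Set.range (scalar n) := by
  have htop : (centralizerModScalars R Z).comap toGL = ⊤ := by
    rw [eq_top_iff, ← hS, Subgroup.closure_le]
    exact hZ
  refine mem_range_scalar_of_forall_transvection_mul_eq hn fun i j hij => ?_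
  obtain ⟨μ, hμ⟩ : transvection hij (1 : R) ∈ (centralizerModScalars R Z).comap toGL :=
    htop ▸ Subgroup.mem_top _
  exact ⟨μ, (Units.mul_inv_eq_iff_eq_mul _).mp hμ⟩

/-- The differential at `(1, 1)` of `(x, y) ↦ (x⁻¹ a x) (y⁻¹ b y)`, left-translated by
`(a b)⁻¹`. -/
noncomputable def conjMulDifferential (a b : SpecialLinearGroup n R) :
    LinearMap.ker (traceLinearMap n R R) × LinearMap.ker (traceLinearMap n R R) →ₗ[R]
      Matrix n n R :=
  ((LinearMap.mulLeftRight R ((b⁻¹).1, b.1) ∘ₗ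
        (LinearMap.id - LinearMap.mulLeftRight R ((a⁻¹).1, a.1))).coprod
      (LinearMap.id - LinearMap.mulLeftRight R ((b⁻¹).1, b.1))) ∘ₗ
    (LinearMap.ker _).subtype.prodMap (LinearMap.ker _).subtype

theorem conjMulDifferential_apply (a b : SpecialLinearGroup n R) (X Y) :
    conjMulDifferential a b (X, Y) =
      (b⁻¹).1 * (X.1 - (a⁻¹).1 * X.1 * a.1) * b.1 + (Y.1 - (b⁻¹).1 * Y.1 * b.1) := by
  rfl

theorem toGL_mem_centralizerModScalars_of_forall_trace_mul_conjMulDifferential_eq_zero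
    {a b : SpecialLinearGroup n R} {W : Matrix n n R}
    (h : ∀ p, (W * conjMulDifferential a b p).trace = 0) :
    toGL a ∈ centralizerModScalars R W ∧ toGL b ∈ centralizerModScalars R W := by
  obtain ⟨c, hc⟩ : W - b.1 * W * (b⁻¹).1 ∈ Set.range (scalar n) :=
    mem_range_scalar_of_forall_trace_mul_eq_zero fun Y hY => by
      simpa only [conjMulDifferential_apply, ZeroMemClass.coe_zero, mul_zero, zero_mul, sub_zero,
        zero_add, trace_mul_sub_mul_mul] using h (0, ⟨Y, hY⟩)
  set U := b.1 * W * (b⁻¹).1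
  obtain ⟨d, hd⟩ : U - a.1 * U * (a⁻¹).1 ∈ Set.range (scalar n) :=
    mem_range_scalar_of_forall_trace_mul_eq_zero fun X hX => by
      simpa only [conjMulDifferential_apply, ZeroMemClass.coe_zero, mul_zero, zero_mul, sub_zero,
        add_zero, trace_mul_mul_mul_rotate, trace_mul_sub_mul_mul] using h (⟨X, hX⟩, 0)
  have hU : U = W + algebraMap R _ (-c) := by
    rw [map_neg]
    change U = W + -scalar n c
    rw [hc]
    abel
  refine ⟨?_, mem_centralizerModScalars_of_sub_eq hc.symm⟩
  rw [← centralizerModScalars_add_algebraMap W (-c), ← hU]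
  exact mem_centralizerModScalars_of_sub_eq hd.symm

end Matrix.SpecialLinearGroup

theorem stmt_12_general (n : ℕ) (hn : 3 ≤ n) (F : Type*) [Field F]
    (a b : Matrix.SpecialLinearGroup (Fin n) F)
    (hab : Subgroup.closure {a, b} = (⊤ : Subgroup (Matrix.SpecialLinearGroup (Fin n) F))) :
    ∀ Z : Matrix (Fin n) (Fin n) F, Z.trace = 0 →
      ∃ X Y : Matrix (Fin n) (Fin n) F, X.trace = 0 ∧ Y.trace = 0 ∧
        (b⁻¹).1 * (X - (a⁻¹).1 * X * a.1) * b.1 + (Y - (b⁻¹).1 * Y * b.1) = Z := by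
  intro Z hZ
  suffices Z ∈ LinearMap.range (SpecialLinearGroup.conjMulDifferential a b) by
    obtain ⟨⟨X, Y⟩, rfl⟩ := this
    exact ⟨X, Y, X.2, Y.2, rfl⟩
  rw [← Subspace.forall_mem_dualAnnihilator_apply_eq_zero_iff]
  intro φ hφ
  obtain ⟨W, hW⟩ := exists_forall_eq_trace_mul φ
  have hW_perp : ∀ p, (W * SpecialLinearGroup.conjMulDifferential a b p).trace = 0 := fun p => by
    rw [← hW]
    exact (Submodule.mem_dualAnnihilator _).mp hφ _ (LinearMap.mem_range_self _ p)
  obtain ⟨ha, hb⟩ :=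
    SpecialLinearGroup.toGL_mem_centralizerModScalars_of_forall_trace_mul_conjMulDifferential_eq_zero
      hW_perp
  obtain ⟨c, rfl⟩ := SpecialLinearGroup.mem_range_scalar_of_closure_eq_top (by simpa using hn) hab
    (by rintro g (rfl | rfl); exacts [ha, hb])
  rw [hW, scalar_apply, ← smul_eq_diagonal_mul, trace_smul, hZ, smul_zero]

theorem stmt_12 (n : ℕ) (hn : 3 ≤ n) (F : Type*) [Field F] [Fintype F]
    (a b : Matrix.SpecialLinearGroup (Fin n) F)
    (hab : Subgroup.closure {a, b} = (⊤ : Subgroup (Matrix.SpecialLinearGroup (Fin n) F))) :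
    ∀ Z : Matrix (Fin n) (Fin n) F, Z.trace = 0 →
      ∃ X Y : Matrix (Fin n) (Fin n) F, X.trace = 0 ∧ Y.trace = 0 ∧
        (b⁻¹).1 * (X - (a⁻¹).1 * X * a.1) * b.1 + (Y - (b⁻¹).1 * Y * b.1) = Z :=
  stmt_12_general n hn F a b hab
end

section
/- Let q, m be positive integers and set n := 3m. Let g_1, …, g_m ∈ SL_3(ℤ; q) with g_1 g_2 ⋯ g_m = 1. Then the block-diagonal matrix g := diag(g_1, …, g_m) ∈ SL_n(ℤ) lies in the product set L_n(ℤ;q) · Ũ_n(ℤ;q) · U_n(ℤ;q), where Ũ_n(ℤ;q) := { h k h⁻¹ : k ∈ U_n(ℤ;q), h ∈ SL_n(ℤ) }. -/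
/-!
Write `h_j = g_0 ⋯ g_{j-1}` for the prefix products, so `h_0 = h_m = 1`, and
`w_j = h_{j+1} - h_j = h_j (g_j - 1) ≡ 0 mod q`. Work with `m × m` matrices over the ring of
`3 × 3` matrices. Telescoping `∑_{i ≤ k < j} w_k = h_j - h_i` gives `diag(g_j) = L (1 + N) U`, where
every row of `N` is `(w_0, …, w_{m-1})`, `L` is unipotent lower triangular with blocks `-h_i⁻¹ w_j`
and `U` unipotent upper triangular with blocks `-h_j⁻¹ w_j`. Since `∑_j w_j = h_m - 1 = 0`,
conjugating `1 + N` by the unipotent lower triangular matrix whose first block column consists of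
identities gives the unipotent upper triangular matrix whose only nonzero off-diagonal blocks are
the `w_j` in the first block row. The off-diagonal blocks of `L`, `U` and of that conjugate are
`≡ 0 mod q`.
-/

/-- The principal congruence subgroup `SL_n(ℤ; q)`: matrices congruent to `1` modulo `q`. -/
def SLcong (n : ℕ) (q : ℤ) : Set (Matrix.SpecialLinearGroup (Fin n) ℤ) :=
  {g | ∀ i j, q ∣ (g.1 i j - (1 : Matrix (Fin n) (Fin n) ℤ) i j)}

/-- `Ũ_n(ℤ;q)`: the set of all `SL_n(ℤ)`-conjugates of elements of `U_n(ℤ;q)`. -/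
def Utilde (n : ℕ) (q : ℤ) : Set (Matrix.SpecialLinearGroup (Fin n) ℤ) :=
  {x | ∃ h : Matrix.SpecialLinearGroup (Fin n) ℤ, ∃ k ∈ Un n q, x = h * k * h⁻¹}

/-- `M` is the block-diagonal `3m × 3m` matrix with `3 × 3` diagonal blocks `g 0, …, g (m-1)`. -/
def IsBlockDiag3 {m : ℕ} (g : Fin m → Matrix (Fin 3) (Fin 3) ℤ)
    (M : Matrix (Fin (3 * m)) (Fin (3 * m)) ℤ) : Prop :=
  ∀ a b : Fin (3 * m),
    M a b = if h : (a : ℕ) / 3 = (b : ℕ) / 3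
      then g ⟨(a : ℕ) / 3, by have := a.isLt; omega⟩
             ⟨(a : ℕ) % 3, by omega⟩ ⟨(b : ℕ) % 3, by omega⟩
      else 0

open Matrix

section Unitriangular

variable {n R : Type*} [Zero R] [One R]

def IsLowerUnitriangular [LT n] (A : Matrix n n R) : Prop :=
  A.IsLowerTriangular ∧ ∀ i, A i i = 1

def IsUpperUnitriangular [LT n] (A : Matrix n n R) : Prop :=
  A.IsUpperTriangular ∧ ∀ i, A i i = 1

end Unitriangular

section BlockEmbedding

variable {R : Type*} [Ring R] (k m : ℕ)

def blockIndexEquiv : Fin m × Fin k ≃ Fin (k * m) :=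
  finProdFinEquiv.trans (finCongr (Nat.mul_comm m k))

def blockEmbed : Matrix (Fin m) (Fin m) (Matrix (Fin k) (Fin k) R) ≃+*
    Matrix (Fin (k * m)) (Fin (k * m)) R :=
  (compRingEquiv (Fin m) (Fin k) R).trans (reindexRingEquiv R (blockIndexEquiv k m))

variable {k m}

def blockIdx (a : Fin (k * m)) : Fin m := ⟨a / k, Nat.div_lt_of_lt_mul a.2⟩

def blockPos (a : Fin (k * m)) : Fin k := ⟨a % k, Nat.mod_lt _ (Nat.pos_of_mul_pos_right a.pos)⟩

lemma blockEmbed_apply (B : Matrix (Fin m) (Fin m) (Matrix (Fin k) (Fin k) R)) (a b : Fin (k * m)) :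
    blockEmbed k m B a b = B (blockIdx a) (blockIdx b) (blockPos a) (blockPos b) :=
  rfl

lemma blockIdx_le_of_le {a b : Fin (k * m)} (hab : a ≤ b) : blockIdx a ≤ blockIdx b :=
  Nat.div_le_div_right hab

lemma eq_of_blockIdx_eq_of_blockPos_eq {a b : Fin (k * m)} (h₁ : blockIdx a = blockIdx b)
    (h₂ : blockPos a = blockPos b) : a = b := by
  rw [Fin.ext_iff] at h₁ h₂ ⊢
  rw [← Nat.div_add_mod a k, ← Nat.div_add_mod b k]
  exact congrArg₂ _ (congrArg _ h₁) h₂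

lemma map_blockEmbed {S : Type*} [Ring S] (B : Matrix (Fin m) (Fin m) (Matrix (Fin k) (Fin k) R))
    (f : R → S) : (blockEmbed k m B).map f = blockEmbed k m (B.map (·.map f)) :=
  rfl

lemma blockEmbed_apply_of_blockIdx_eq {B : Matrix (Fin m) (Fin m) (Matrix (Fin k) (Fin k) R)}
    (hB : ∀ i, B i i = 1) {a b : Fin (k * m)} (hab : blockIdx a = blockIdx b) :
    blockEmbed k m B a b = (1 : Matrix (Fin (k * m)) (Fin (k * m)) R) a b := by
  rw [blockEmbed_apply, hab, hB]
  by_cases h : a = b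
  · subst h
    rw [one_apply_eq, one_apply_eq]
  · rw [one_apply_ne h, one_apply_ne (h ∘ eq_of_blockIdx_eq_of_blockPos_eq hab)]

variable {B : Matrix (Fin m) (Fin m) (Matrix (Fin k) (Fin k) R)}

lemma IsLowerUnitriangular.blockEmbed (hB : IsLowerUnitriangular B) :
    IsLowerUnitriangular (blockEmbed k m B) := by
  refine ⟨fun a b (hab : a < b) => ?_, fun a => ?_⟩
  · rcases (blockIdx_le_of_le hab.le).lt_or_eq with h | h
    · have hblock : B (blockIdx a) (blockIdx b) = 0 := hB.1 h
      rw [blockEmbed_apply, hblock, Matrix.zero_apply]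
    · rw [blockEmbed_apply_of_blockIdx_eq hB.2 h, one_apply_ne hab.ne]
  · rw [blockEmbed_apply_of_blockIdx_eq hB.2 rfl, one_apply_eq]

lemma IsUpperUnitriangular.blockEmbed (hB : IsUpperUnitriangular B) :
    IsUpperUnitriangular (blockEmbed k m B) := by
  refine ⟨fun a b (hab : b < a) => ?_, fun a => ?_⟩
  · rcases (blockIdx_le_of_le hab.le).lt_or_eq with h | h
    · have hblock : B (blockIdx a) (blockIdx b) = 0 := hB.1 h
      rw [blockEmbed_apply, hblock, Matrix.zero_apply]
    · rw [blockEmbed_apply_of_blockIdx_eq hB.2 h.symm, one_apply_ne hab.ne']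
  · rw [blockEmbed_apply_of_blockIdx_eq hB.2 rfl, one_apply_eq]

end BlockEmbedding

section PrefixProducts

variable {R : Type*} [Ring R] {m : ℕ} (g : Fin m → Rˣ)

def prefixProd (j : ℕ) : Rˣ := ((List.ofFn g).take j).prod

def prefixDelta (j : ℕ) : R := (prefixProd g (j + 1) : R) - prefixProd g j

@[simp]
lemma prefixProd_zero : prefixProd g 0 = 1 := rfl

lemma prefixProd_succ {j : ℕ} (hj : j < m) : prefixProd g (j + 1) = prefixProd g j * g ⟨j, hj⟩ := by
  rw [prefixProd, List.prod_take_succ _ _ (by simpa using hj), List.getElem_ofFn, prefixProd]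

lemma prefixProd_of_le {j : ℕ} (hj : m ≤ j) : prefixProd g j = (List.ofFn g).prod := by
  rw [prefixProd, List.take_of_length_le (by simpa using hj)]

lemma inv_prefixProd_mul_prefixDelta (j : Fin m) :
    ((prefixProd g j)⁻¹ : Rˣ) * prefixDelta g j = g j - 1 := by
  rw [prefixDelta, prefixProd_succ g j.2, mul_sub, Units.val_mul, ← mul_assoc, Units.inv_mul,
    one_mul, Fin.eta]

lemma sum_ite_Ico_prefixDelta (x y : R) {i j : ℕ} (hij : i ≤ j) (hj : j ≤ m) :
    ∑ k : Fin m, (if (k : ℕ) ∈ Finset.Ico i j then x * prefixDelta g k * y else 0) =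
      x * ((prefixProd g j : R) - prefixProd g i) * y := by
  rw [Fin.sum_univ_eq_sum_range
      (fun k => if k ∈ Finset.Ico i j then x * prefixDelta g k * y else 0),
    Finset.sum_ite_mem, Finset.inter_eq_right.2
      (Finset.range_eq_Ico m ▸ Finset.Ico_subset_Ico (Nat.zero_le i) hj), ← Finset.sum_mul,
    ← Finset.mul_sum]
  unfold prefixDelta
  rw [Finset.sum_Ico_sub (fun j => (prefixProd g j : R)) hij]

lemma sum_prefixDelta : ∑ k : Fin m, prefixDelta g k = prefixProd g m - 1 := by
  rw [Fin.sum_univ_eq_sum_range (prefixDelta g)]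
  exact (Finset.sum_range_sub (fun j => (prefixProd g j : R)) m).trans (by simp)

variable {S : Type*} [Ring S] {φ : R →+* S}

lemma map_prefixProd (hφ : ∀ i, φ (g i) = 1) (j : ℕ) : φ (prefixProd g j) = 1 := by
  have : Units.map φ.toMonoidHom (prefixProd g j) = 1 := by
    rw [prefixProd, map_list_prod]
    refine List.prod_eq_one fun x hx => ?_
    obtain ⟨y, hy, rfl⟩ := List.mem_map.1 hx
    obtain ⟨i, rfl⟩ := List.mem_ofFn.1 (List.mem_of_mem_take hy)
    exact Units.ext (hφ i)
  simpa using congrArg Units.val this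

lemma map_prefixDelta (hφ : ∀ i, φ (g i) = 1) (j : ℕ) : φ (prefixDelta g j) = 0 := by
  rw [prefixDelta, map_sub, map_prefixProd g hφ, map_prefixProd g hφ, sub_self]

end PrefixProducts

section BlockFactors

variable {R : Type*} [Ring R] {m : ℕ} (g : Fin m → Rˣ)

def lowerFactor : Matrix (Fin m) (Fin m) R :=
  1 + of fun i j : Fin m => if j < i then -((↑(prefixProd g i)⁻¹ : R) * prefixDelta g j) else 0

def middleFactor : Matrix (Fin m) (Fin m) R :=
  1 + replicateRow (Fin m) fun j : Fin m => prefixDelta g j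

def upperFactor : Matrix (Fin m) (Fin m) R :=
  1 + of fun i j : Fin m => if i < j then -((↑(prefixProd g j)⁻¹ : R) * prefixDelta g j) else 0

lemma lowerFactor_mul_middleFactor :
    lowerFactor g * middleFactor g =
      1 + of fun i j : Fin m =>
        if i ≤ j then (↑(prefixProd g i)⁻¹ : R) * prefixDelta g j else 0 := by
  have hsum (i j : Fin m) :
      ∑ k : Fin m, (if k < i then -((↑(prefixProd g i)⁻¹ : R) * prefixDelta g k) else 0) *
        prefixDelta g j =
      -((↑(prefixProd g i)⁻¹ : R) * ((prefixProd g i : R) - prefixProd g 0) * prefixDelta g j) := by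
    rw [← sum_ite_Ico_prefixDelta g _ _ (Nat.zero_le _) i.2.le, ← Finset.sum_neg_distrib]
    refine Finset.sum_congr rfl fun k _ => ?_
    simp only [Finset.mem_Ico, Nat.zero_le, true_and, Fin.val_fin_lt]
    split_ifs <;> simp [mul_assoc]
  rw [lowerFactor, middleFactor, add_mul, one_mul, mul_add, mul_one, add_assoc]
  ext i j
  simp only [Matrix.add_apply, mul_apply, of_apply, replicateRow_apply, hsum]
  rw [prefixProd_zero, Units.val_one, mul_sub, Units.inv_mul, mul_one]
  rcases lt_or_ge j i with h | h
  · rw [if_pos h, if_neg h.not_ge]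
    noncomm_ring
  · rw [if_neg h.not_gt, if_pos h]
    noncomm_ring

lemma lowerFactor_mul_middleFactor_mul_upperFactor :
    lowerFactor g * middleFactor g * upperFactor g = diagonal fun i => (g i : R) := by
  have hsum (i j : Fin m) (hij : i ≤ j) :
      ∑ k : Fin m, (if i ≤ k then (↑(prefixProd g i)⁻¹ : R) * prefixDelta g k else 0) *
        (if k < j then -((↑(prefixProd g j)⁻¹ : R) * prefixDelta g j) else 0) =
      -((↑(prefixProd g i)⁻¹ : R) * ((prefixProd g j : R) - prefixProd g i) *
        ((↑(prefixProd g j)⁻¹ : R) * prefixDelta g j)) := by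
    rw [← sum_ite_Ico_prefixDelta g _ _ hij j.2.le, ← Finset.sum_neg_distrib]
    refine Finset.sum_congr rfl fun k _ => ?_
    simp only [Finset.mem_Ico, Fin.val_fin_le, Fin.val_fin_lt]
    split_ifs <;> simp_all [mul_assoc]
  rw [lowerFactor_mul_middleFactor, upperFactor, add_mul, one_mul, mul_add, mul_one, add_assoc]
  ext i j
  simp only [Matrix.add_apply, mul_apply, of_apply, diagonal_apply]
  rcases lt_trichotomy i j with h | rfl | h
  · rw [hsum i j h.le, if_pos h.le, if_pos h, if_neg h.ne, one_apply_ne h.ne]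
    simp only [mul_sub, sub_mul, mul_assoc, Units.mul_inv_cancel_left, Units.inv_mul_cancel_left]
    abel
  · rw [hsum i i le_rfl, if_pos le_rfl, if_neg (lt_irrefl i), if_pos rfl, one_apply_eq]
    simp only [sub_self, mul_zero, zero_mul, neg_zero, add_zero, inv_prefixProd_mul_prefixDelta]
    abel
  · have hzero : ∀ k : Fin m, (if i ≤ k then (↑(prefixProd g i)⁻¹ : R) * prefixDelta g k else 0) *
        (if k < j then -((↑(prefixProd g j)⁻¹ : R) * prefixDelta g j) else 0) = 0 := fun k => by
      split_ifs with h₁ h₂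
      · exact absurd (h₁.trans_lt h₂) h.not_gt
      all_goals simp only [zero_mul, mul_zero]
    simp only [hzero, Finset.sum_const_zero, if_neg h.not_ge, if_neg h.not_gt, if_neg h.ne',
      one_apply_ne h.ne', add_zero]

def conjugator : Matrix (Fin m) (Fin m) R :=
  of fun i j : Fin m => if (j : ℕ) = 0 ∨ i = j then 1 else 0

def upperConjFactor : Matrix (Fin m) (Fin m) R :=
  1 + of fun i j : Fin m => if (i : ℕ) = 0 ∧ (j : ℕ) ≠ 0 then prefixDelta g j else 0

lemma middleFactor_mul_conjugator (hg : (List.ofFn g).prod = 1) :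
    middleFactor g * conjugator = conjugator * upperConjFactor g := by
  rw [middleFactor, upperConjFactor, add_mul, one_mul, mul_add, mul_one]
  congr 1
  -- both sides have block `w_j` in every column `j ≠ 0` and zeros in column `0`
  ext i j
  simp only [mul_apply, replicateRow_apply, conjugator, of_apply]
  by_cases hj : (j : ℕ) = 0
  · simp [hj, sum_prefixDelta, prefixProd_of_le g le_rfl, hg]
  · rw [Finset.sum_eq_single_of_mem j (Finset.mem_univ j) fun k _ hk => by simp [hj, hk],
      Finset.sum_eq_single_of_mem ⟨0, j.pos⟩ (Finset.mem_univ _) fun k _ hk => by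
        simp [hj, Fin.ext_iff.not.mp hk]]
    simp [hj]

lemma isLowerUnitriangular_lowerFactor : IsLowerUnitriangular (lowerFactor g) :=
  ⟨fun i j (h : i < j) => by simp [lowerFactor, one_apply_ne h.ne, h.not_gt],
    fun i => by simp [lowerFactor]⟩

lemma isUpperUnitriangular_upperFactor : IsUpperUnitriangular (upperFactor g) :=
  ⟨fun i j (h : j < i) => by simp [upperFactor, one_apply_ne h.ne', h.not_gt],
    fun i => by simp [upperFactor]⟩

lemma isLowerUnitriangular_conjugator :
    IsLowerUnitriangular (conjugator : Matrix (Fin m) (Fin m) R) :=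
  ⟨fun i j (h : i < j) => by simp [conjugator, h.ne, (Nat.zero_lt_of_lt h).ne'],
    fun i => by simp [conjugator]⟩

lemma isUpperUnitriangular_upperConjFactor : IsUpperUnitriangular (upperConjFactor g) :=
  ⟨fun i j (h : j < i) => by
      simp [upperConjFactor, one_apply_ne h.ne', (Nat.zero_lt_of_lt h).ne'],
    fun i => by simp [upperConjFactor]⟩

variable {S : Type*} [Ring S] {φ : R →+* S}

lemma map_lowerFactor (hφ : ∀ i, φ (g i) = 1) : (lowerFactor g).map φ = 1 := by
  ext i j
  simp [lowerFactor, one_apply, apply_ite φ, map_prefixDelta g hφ]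

lemma map_upperFactor (hφ : ∀ i, φ (g i) = 1) : (upperFactor g).map φ = 1 := by
  ext i j
  simp [upperFactor, one_apply, apply_ite φ, map_prefixDelta g hφ]

lemma map_upperConjFactor (hφ : ∀ i, φ (g i) = 1) : (upperConjFactor g).map φ = 1 := by
  ext i j
  simp [upperConjFactor, one_apply, apply_ite φ, map_prefixDelta g hφ]

end BlockFactors

section IntegerMatrices

lemma IsLowerUnitriangular.det_eq_one {n R : Type*} [Fintype n] [LinearOrder n] [CommRing R]
    {A : Matrix n n R} (hA : IsLowerUnitriangular A) : A.det = 1 := by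
  rw [det_of_isLowerTriangular A hA.1]
  exact Finset.prod_eq_one fun i _ => hA.2 i

lemma IsUpperUnitriangular.det_eq_one {n R : Type*} [Fintype n] [LinearOrder n] [CommRing R]
    {A : Matrix n n R} (hA : IsUpperUnitriangular A) : A.det = 1 := by
  rw [det_of_isUpperTriangular hA.1]
  exact Finset.prod_eq_one fun i _ => hA.2 i

def IsLowerUnitriangular.toSL {n R : Type*} [Fintype n] [LinearOrder n] [CommRing R]
    {A : Matrix n n R} (hA : IsLowerUnitriangular A) : SpecialLinearGroup n R :=
  ⟨A, hA.det_eq_one⟩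

def IsUpperUnitriangular.toSL {n R : Type*} [Fintype n] [LinearOrder n] [CommRing R]
    {A : Matrix n n R} (hA : IsUpperUnitriangular A) : SpecialLinearGroup n R :=
  ⟨A, hA.det_eq_one⟩

variable {n q : ℕ}

lemma dvd_of_map_intCast_eq_one {A : Matrix (Fin n) (Fin n) ℤ}
    (hA : A.map (Int.cast : ℤ → ZMod q) = 1) {i j : Fin n} (hij : i ≠ j) : (q : ℤ) ∣ A i j := by
  rw [← ZMod.intCast_zmod_eq_zero_iff_dvd]
  simpa [one_apply_ne hij] using congrFun (congrFun hA i) j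

lemma IsLowerUnitriangular.toSL_mem_Ln {A : Matrix (Fin n) (Fin n) ℤ} (hA : IsLowerUnitriangular A)
    (hAq : A.map (Int.cast : ℤ → ZMod q) = 1) : hA.toSL ∈ Ln n q :=
  ⟨hA.2, fun _ _ h => hA.1 h, fun _ _ h => dvd_of_map_intCast_eq_one hAq h.ne'⟩

lemma IsUpperUnitriangular.toSL_mem_Un {A : Matrix (Fin n) (Fin n) ℤ} (hA : IsUpperUnitriangular A)
    (hAq : A.map (Int.cast : ℤ → ZMod q) = 1) : hA.toSL ∈ Un n q :=
  ⟨hA.2, fun _ _ h => hA.1 h, fun _ _ h => dvd_of_map_intCast_eq_one hAq h.ne⟩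

lemma map_intCast_eq_one_of_mem_SLcong {A : SpecialLinearGroup (Fin n) ℤ} (hA : A ∈ SLcong n q) :
    A.1.map (Int.cast : ℤ → ZMod q) = 1 := by
  ext i j
  simpa [one_apply, apply_ite] using ((ZMod.intCast_eq_intCast_iff_dvd_sub _ _ q).2 (hA i j)).symm

lemma map_blockEmbed_eq_one {k m : ℕ} {B : Matrix (Fin m) (Fin m) (Matrix (Fin k) (Fin k) ℤ)}
    (hB : B.map (Int.castRingHom (ZMod q)).mapMatrix = 1) :
    (blockEmbed k m B).map (Int.cast : ℤ → ZMod q) = 1 := by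
  rw [map_blockEmbed]
  exact (congrArg (blockEmbed k m) hB).trans (map_one _)

lemma IsBlockDiag3.eq_blockEmbed_diagonal {m : ℕ} {G : Fin m → Matrix (Fin 3) (Fin 3) ℤ}
    {M : Matrix (Fin (3 * m)) (Fin (3 * m)) ℤ} (h : IsBlockDiag3 G M) :
    M = blockEmbed 3 m (diagonal G) := by
  ext a b
  rw [h, blockEmbed_apply, diagonal_apply]
  by_cases hab : (a : ℕ) / 3 = b / 3
  · rw [dif_pos hab, if_pos (Fin.ext hab)]
    rfl
  · rw [dif_neg hab, if_neg (hab ∘ congrArg Fin.val), Matrix.zero_apply]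

end IntegerMatrices

theorem stmt_16_general (q m : ℕ)
    (g : Fin m → Matrix.SpecialLinearGroup (Fin 3) ℤ)
    (hg : ∀ i, g i ∈ SLcong 3 q)
    (hprod : (List.ofFn g).prod = 1)
    (M : Matrix.SpecialLinearGroup (Fin (3 * m)) ℤ)
    (hM : IsBlockDiag3 (fun i => (g i).1) M.1) :
    ∃ l ∈ Ln (3 * m) q, ∃ u' ∈ Utilde (3 * m) q, ∃ u ∈ Un (3 * m) q,
      M = l * u' * u := by
  let G : Fin m → (Matrix (Fin 3) (Fin 3) ℤ)ˣ := fun i => SpecialLinearGroup.toGL (g i)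
  have hG : (List.ofFn G).prod = 1 := by
    rw [show G = SpecialLinearGroup.toGL ∘ g from rfl, ← List.map_ofFn, ← map_list_prod, hprod,
      map_one]
  have hGq (i : Fin m) :
      (Int.castRingHom (ZMod q)).mapMatrix (G i : Matrix (Fin 3) (Fin 3) ℤ) = 1 :=
    map_intCast_eq_one_of_mem_SLcong (hg i)
  have hL := (isLowerUnitriangular_lowerFactor G).blockEmbed (k := 3)
  have hU := (isUpperUnitriangular_upperFactor G).blockEmbed (k := 3)
  have hH : IsLowerUnitriangular (blockEmbed (R := ℤ) 3 m conjugator) :=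
    isLowerUnitriangular_conjugator.blockEmbed
  have hK := (isUpperUnitriangular_upperConjFactor G).blockEmbed (k := 3)
  have hfactor : blockEmbed 3 m (lowerFactor G) * blockEmbed 3 m (middleFactor G) *
      blockEmbed 3 m (upperFactor G) = M := by
    rw [← map_mul, ← map_mul, lowerFactor_mul_middleFactor_mul_upperFactor,
      hM.eq_blockEmbed_diagonal]
    rfl
  have hdet : (blockEmbed 3 m (middleFactor G)).det = 1 := by
    simpa [hL.det_eq_one, hU.det_eq_one] using congrArg det hfactor
  have hconj : ⟨_, hdet⟩ = hH.toSL * hK.toSL * hH.toSL⁻¹ := by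
    refine eq_mul_inv_of_mul_eq (Subtype.ext ?_)
    change blockEmbed 3 m (middleFactor G) * blockEmbed 3 m conjugator =
      blockEmbed 3 m conjugator * blockEmbed 3 m (upperConjFactor G)
    rw [← map_mul, ← map_mul, middleFactor_mul_conjugator G hG]
  exact ⟨hL.toSL, hL.toSL_mem_Ln (map_blockEmbed_eq_one (map_lowerFactor G hGq)),
    _, ⟨hH.toSL, hK.toSL,
      hK.toSL_mem_Un (map_blockEmbed_eq_one (map_upperConjFactor G hGq)), hconj⟩,
    hU.toSL, hU.toSL_mem_Un (map_blockEmbed_eq_one (map_upperFactor G hGq)),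
    Subtype.ext hfactor.symm⟩

theorem stmt_16 (q m : ℕ) (hq : 0 < q) (hm : 0 < m)
    (g : Fin m → Matrix.SpecialLinearGroup (Fin 3) ℤ)
    (hg : ∀ i, g i ∈ SLcong 3 q)
    (hprod : (List.ofFn g).prod = 1)
    (M : Matrix.SpecialLinearGroup (Fin (3 * m)) ℤ)
    (hM : IsBlockDiag3 (fun i => (g i).1) M.1) :
    ∃ l ∈ Ln (3 * m) q, ∃ u' ∈ Utilde (3 * m) q, ∃ u ∈ Un (3 * m) q,
      M = l * u' * u :=
  stmt_16_general q m g hg hprod M hM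
end
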